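/- arXiv:2007.01601 — 3 statements merged into one kernel-verified Lean document; each statement's English description precedes it below -/
import Mathlib

section
/- Let n ∈ ℕ, let M be an invertible real n×n matrix, A a real n×n matrix, S, L ∈ ℝⁿ, and Δt > 0, and assume 1 + (Δt/2)·Sᵀ M⁻¹ A S ≠ 0. Then there exists a unique vector U ∈ ℝⁿ satisfying (1/Δt)·M U + (1/2)·(Sᵀ U)·(A S) = L, and this solution satisfies Sᵀ U = Δt·(Sᵀ M⁻¹ L)/(1 + (Δt/2)·Sᵀ M⁻¹ A S). -/
open Matrix

/-! Moving the rank-one term to the right, `U = M⁻¹(L - (Sᵀ U) w)`; pairing this with `S` gives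
a scalar linear equation `(1 + Sᵀ M⁻¹ w) (Sᵀ U) = Sᵀ M⁻¹ L` for the single unknown `Sᵀ U`. Once
`Sᵀ U` is known, `U` is given explicitly by the first identity, which yields existence and
uniqueness (the Sherman–Morrison formula). The SAV system is of this form after multiplying
it by `Δt`, with `w = (Δt / 2) A S`. -/

namespace Matrix

variable {ι K : Type*} [Fintype ι] [DecidableEq ι] [Field K] {M : Matrix ι ι K}

theorem mulVec_eq_iff_eq_inv_mulVec (hM : IsUnit M) {u v : ι → K} :
    M *ᵥ u = v ↔ u = M⁻¹ *ᵥ v := by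
  have hdet := (isUnit_iff_isUnit_det M).mp hM
  constructor <;> rintro rfl
  · rw [mulVec_mulVec, nonsing_inv_mul M hdet, one_mulVec]
  · rw [mulVec_mulVec, mul_nonsing_inv M hdet, one_mulVec]

variable {S w L : ι → K}

theorem mulVec_add_dotProduct_smul_eq_iff (hM : IsUnit M) {U : ι → K} :
    M *ᵥ U + (S ⬝ᵥ U) • w = L ↔ U = M⁻¹ *ᵥ L - (S ⬝ᵥ U) • (M⁻¹ *ᵥ w) := by
  rw [← eq_sub_iff_add_eq, mulVec_eq_iff_eq_inv_mulVec hM, mulVec_sub, mulVec_smul]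

theorem one_add_dotProduct_inv_mulVec_mul_eq (hM : IsUnit M) {U : ι → K}
    (hU : M *ᵥ U + (S ⬝ᵥ U) • w = L) :
    (1 + S ⬝ᵥ (M⁻¹ *ᵥ w)) * (S ⬝ᵥ U) = S ⬝ᵥ (M⁻¹ *ᵥ L) := by
  have hSU := congrArg (S ⬝ᵥ ·) ((mulVec_add_dotProduct_smul_eq_iff hM).mp hU)
  simp only [dotProduct_sub, dotProduct_smul, smul_eq_mul] at hSU
  linear_combination hSU

theorem existsUnique_mulVec_add_dotProduct_smul_eq (hM : IsUnit M)
    (hden : 1 + S ⬝ᵥ (M⁻¹ *ᵥ w) ≠ 0) :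
    ∃! U : ι → K, M *ᵥ U + (S ⬝ᵥ U) • w = L := by
  obtain ⟨σ, hσ⟩ : ∃ σ, σ * (1 + S ⬝ᵥ (M⁻¹ *ᵥ w)) = S ⬝ᵥ (M⁻¹ *ᵥ L) :=
    ⟨_, div_mul_cancel₀ _ hden⟩
  refine ⟨M⁻¹ *ᵥ L - σ • (M⁻¹ *ᵥ w), (mulVec_add_dotProduct_smul_eq_iff hM).mpr ?_,
    fun U hU => ?_⟩
  · have hSU₀ : S ⬝ᵥ (M⁻¹ *ᵥ L) - σ * S ⬝ᵥ (M⁻¹ *ᵥ w) = σ := by linear_combination -hσ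
    rw [dotProduct_sub, dotProduct_smul, smul_eq_mul, hSU₀]
  · have hSU : S ⬝ᵥ U = σ := mul_left_cancel₀ hden <| by
      rw [one_add_dotProduct_inv_mulVec_mul_eq hM hU, mul_comm, hσ]
    rw [(mulVec_add_dotProduct_smul_eq_iff hM).mp hU, hSU]

end Matrix

/-- Let `M` be an invertible real `n×n` matrix, `A` a real `n×n` matrix, `S, L ∈ ℝⁿ`,
`Δt > 0`, and assume `1 + (Δt/2)·Sᵀ M⁻¹ A S ≠ 0`. Then there exists a unique vector `U`
with `(1/Δt)·M U + (1/2)·(Sᵀ U)·(A S) = L`, and it satisfies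
`Sᵀ U = Δt·(Sᵀ M⁻¹ L)/(1 + (Δt/2)·Sᵀ M⁻¹ A S)`. -/
theorem sav_linear_solver (n : ℕ) (M A : Matrix (Fin n) (Fin n) ℝ) (hM : IsUnit M)
    (S L : Fin n → ℝ) (Δt : ℝ) (hΔt : 0 < Δt)
    (hden : 1 + (Δt / 2) * (S ⬝ᵥ (M⁻¹ *ᵥ (A *ᵥ S))) ≠ 0) :
    (∃! U : Fin n → ℝ,
      (1 / Δt) • (M *ᵥ U) + ((1 / 2) * (S ⬝ᵥ U)) • (A *ᵥ S) = L) ∧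
    ∀ U : Fin n → ℝ,
      (1 / Δt) • (M *ᵥ U) + ((1 / 2) * (S ⬝ᵥ U)) • (A *ᵥ S) = L →
      S ⬝ᵥ U = Δt * (S ⬝ᵥ (M⁻¹ *ᵥ L)) / (1 + (Δt / 2) * (S ⬝ᵥ (M⁻¹ *ᵥ (A *ᵥ S)))) := by
  have hΔt0 : Δt ≠ 0 := hΔt.ne'
  have hscaled : ∀ U : Fin n → ℝ,
      (1 / Δt) • (M *ᵥ U) + ((1 / 2) * (S ⬝ᵥ U)) • (A *ᵥ S) = L ↔
        M *ᵥ U + (S ⬝ᵥ U) • ((Δt / 2) • (A *ᵥ S)) = Δt • L := by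
    intro U
    rw [← smul_right_inj hΔt0, smul_add, smul_smul, smul_smul, smul_smul,
      mul_one_div_cancel hΔt0, one_smul]
    ring_nf
  have hden' : 1 + S ⬝ᵥ (M⁻¹ *ᵥ ((Δt / 2) • (A *ᵥ S))) ≠ 0 := by
    rwa [mulVec_smul, dotProduct_smul, smul_eq_mul]
  simp_rw [hscaled]
  refine ⟨existsUnique_mulVec_add_dotProduct_smul_eq hM hden', fun U hU => ?_⟩
  have hSU := one_add_dotProduct_inv_mulVec_mul_eq hM hU
  simp only [mulVec_smul, dotProduct_smul, smul_eq_mul] at hSU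
  exact eq_div_of_mul_eq hden (by rw [mul_comm, hSU])
end

section
/- Let H be a real inner product space, let a : H × H → ℝ be a symmetric bilinear form with a(v,v) ≥ 0 for all v ∈ H, let u⁰, u¹, c⁰, s ∈ H, r⁰ ∈ ℝ, and let Δt, χ, D > 0. Suppose that for all φ ∈ H, ⟨u¹ − u⁰, φ⟩/Δt = χ·a(c⁰, φ) − D·((1/2)·⟨s, u¹ − u⁰⟩ + r⁰)·a(s, φ). Then ⟨s, u¹ − u⁰⟩ = Δt·(χ·a(c⁰, s) − D·r⁰·a(s, s)) / (1 + (D·Δt/2)·a(s, s)), and in particular the denominator is ≥ 1 > 0. -/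
open RealInnerProductSpace

theorem sav_scalar_recovery_general {H : Type*} [NormedAddCommGroup H] [InnerProductSpace ℝ H]
    (a : H →ₗ[ℝ] H →ₗ[ℝ] ℝ)
    (hpos : ∀ v : H, 0 ≤ a v v)
    (u₀ u₁ c₀ s : H) (r₀ : ℝ) (Δt χ D : ℝ)
    (hΔt : 0 < Δt) (hD : 0 < D)
    (heq : ∀ φ : H, ⟪u₁ - u₀, φ⟫ / Δt
      = χ * a c₀ φ - D * ((1 / 2) * ⟪s, u₁ - u₀⟫ + r₀) * a s φ) :
    ⟪s, u₁ - u₀⟫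
      = Δt * (χ * a c₀ s - D * r₀ * a s s) / (1 + (D * Δt / 2) * a s s) ∧
    (1:ℝ) ≤ 1 + (D * Δt / 2) * a s s := by
  have hden : (1:ℝ) ≤ 1 + (D * Δt / 2) * a s s :=
    le_add_of_nonneg_right (mul_nonneg (by positivity) (hpos s))
  refine ⟨?_, hden⟩
  -- Testing with `φ = s` gives a linear equation for the scalar `⟪s, u₁ - u₀⟫`.
  have htest := heq s
  rw [real_inner_comm] at htest
  rw [eq_div_iff (by linarith)]
  field_simp at htest
  linarith

/-- Abstract SAV scalar-recovery identity: if for all `φ ∈ H`,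
`⟨u¹ − u⁰, φ⟩/Δt = χ·a(c⁰, φ) − D·((1/2)·⟨s, u¹ − u⁰⟩ + r⁰)·a(s, φ)`,
where `a` is a symmetric positive semidefinite bilinear form, then
`⟨s, u¹ − u⁰⟩ = Δt·(χ·a(c⁰, s) − D·r⁰·a(s, s)) / (1 + (D·Δt/2)·a(s, s))`,
and the denominator is `≥ 1 > 0`. -/
theorem sav_scalar_recovery {H : Type*} [NormedAddCommGroup H] [InnerProductSpace ℝ H]
    (a : H →ₗ[ℝ] H →ₗ[ℝ] ℝ)
    (hsym : ∀ v w : H, a v w = a w v)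
    (hpos : ∀ v : H, 0 ≤ a v v)
    (u₀ u₁ c₀ s : H) (r₀ : ℝ) (Δt χ D : ℝ)
    (hΔt : 0 < Δt) (hχ : 0 < χ) (hD : 0 < D)
    (heq : ∀ φ : H, ⟪u₁ - u₀, φ⟫ / Δt
      = χ * a c₀ φ - D * ((1 / 2) * ⟪s, u₁ - u₀⟫ + r₀) * a s φ) :
    ⟪s, u₁ - u₀⟫
      = Δt * (χ * a c₀ s - D * r₀ * a s s) / (1 + (D * Δt / 2) * a s s) ∧
    (1:ℝ) ≤ 1 + (D * Δt / 2) * a s s :=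
  sav_scalar_recovery_general a hpos u₀ u₁ c₀ s r₀ Δt χ D hΔt hD heq
end

section
/- Let H be a real inner product space, let a, b : H × H → ℝ be symmetric bilinear forms with a(v,v) ≥ 0 and b(v,v) ≥ 0 for all v ∈ H, and let α > 0, B > 0, χ > 0, Δt > 0. Suppose u⁰, u¹, c⁰, c¹, μ₁, μ₂, s ∈ H and r⁰, r¹ ∈ ℝ satisfy, for all φ ∈ H: (i) ⟨u¹ − u⁰, φ⟩ = −Δt·χ·a(μ₁, φ); (ii) ⟨c¹ − c⁰, φ⟩ = −Δt·⟨μ₂, φ⟩; (iii) ⟨μ₁, φ⟩ = −⟨c⁰, φ⟩ + B·r¹·⟨s, φ⟩; (iv) ⟨μ₂, φ⟩ = b(c¹, φ) + α·⟨c¹, φ⟩ − ⟨u¹, φ⟩; (v) r¹ − r⁰ = (1/2)·⟨s, u¹ − u⁰⟩. Define E(u, c, r) = (1/2)·(b(c,c) + α·‖c‖²) + B·r² − ⟨c, u⟩. Then E(u¹, c¹, r¹) − E(u⁰, c⁰, r⁰) ≤ −Δt·(‖μ₂‖² + χ·a(μ₁, μ₁)) ≤ 0; in particular the discrete energy is nonincreasing.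 -/
/-!
Writing `δc = c¹ - c⁰`, `δu = u¹ - u⁰`, `δr = r¹ - r⁰`, the identity `x² - y² = 2x(x - y) - (x - y)²`
(for `b`, the inner product and the reals) splits the energy difference into
`(b(c¹, δc) + α⟨c¹, δc⟩ - ⟨u¹, δc⟩) + (2B r¹ δr - ⟨c⁰, δu⟩)` minus the numerical dissipation
`½(b(δc, δc) + α‖δc‖²) + B δr² ≥ 0`. Testing (iv) with `δc` and (ii) with `μ₂` turns the first bracket
into `-Δt‖μ₂‖²`; by (v), testing (iii) with `δu` and (i) with `μ₁` turns the second into `-Δt χ a(μ₁, μ₁)`.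
-/

open RealInnerProductSpace

theorem LinearMap.apply_self_sub_apply_self {R M : Type*} [CommRing R] [AddCommGroup M] [Module R M]
    (b : M →ₗ[R] M →ₗ[R] R) (hb : ∀ v w, b v w = b w v) (x y : M) :
    b x x - b y y = 2 * b x (x - y) - b (x - y) (x - y) := by
  simp only [map_sub, LinearMap.sub_apply]
  rw [hb y x]
  ring

section SAV

variable {H : Type*} [NormedAddCommGroup H] [InnerProductSpace ℝ H]

noncomputable def savEnergy (b : H →ₗ[ℝ] H →ₗ[ℝ] ℝ) (α B : ℝ) (u c : H) (r : ℝ) : ℝ :=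
  (1 / 2) * (b c c + α * ‖c‖ ^ 2) + B * r ^ 2 - ⟪c, u⟫

theorem savEnergy_sub_savEnergy (b : H →ₗ[ℝ] H →ₗ[ℝ] ℝ) (hb : ∀ v w, b v w = b w v)
    (α B : ℝ) (u₀ u₁ c₀ c₁ : H) (r₀ r₁ : ℝ) :
    savEnergy b α B u₁ c₁ r₁ - savEnergy b α B u₀ c₀ r₀ =
      (b c₁ (c₁ - c₀) + α * ⟪c₁, c₁ - c₀⟫ - ⟪u₁, c₁ - c₀⟫) +
        (2 * B * r₁ * (r₁ - r₀) - ⟪c₀, u₁ - u₀⟫) -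
        ((1 / 2) * (b (c₁ - c₀) (c₁ - c₀) + α * ‖c₁ - c₀‖ ^ 2) + B * (r₁ - r₀) ^ 2) := by
  have hbc := b.apply_self_sub_apply_self hb c₁ c₀
  have hnorm := norm_sub_sq_real c₁ c₀
  simp only [savEnergy, inner_sub_right, real_inner_self_eq_norm_sq]
  rw [real_inner_comm u₁ c₁, real_inner_comm u₁ c₀]
  linear_combination (1 / 2 : ℝ) * hbc + (α / 2) * hnorm

theorem sav_numerical_dissipation_nonneg (b : H →ₗ[ℝ] H →ₗ[ℝ] ℝ) (hb : ∀ v, 0 ≤ b v v)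
    {α B : ℝ} (hα : 0 ≤ α) (hB : 0 ≤ B) (c : H) (r : ℝ) :
    0 ≤ (1 / 2) * (b c c + α * ‖c‖ ^ 2) + B * r ^ 2 := by
  have := hb c
  positivity

theorem sav_concentration_step {b : H →ₗ[ℝ] H →ₗ[ℝ] ℝ} {α Δt : ℝ} {u₁ c₀ c₁ μ₂ : H}
    (h2 : ∀ φ : H, ⟪c₁ - c₀, φ⟫ = -Δt * ⟪μ₂, φ⟫)
    (h4 : ∀ φ : H, ⟪μ₂, φ⟫ = b c₁ φ + α * ⟪c₁, φ⟫ - ⟪u₁, φ⟫) :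
    b c₁ (c₁ - c₀) + α * ⟪c₁, c₁ - c₀⟫ - ⟪u₁, c₁ - c₀⟫ = -Δt * ‖μ₂‖ ^ 2 := by
  rw [← h4, real_inner_comm, h2, real_inner_self_eq_norm_sq]

theorem sav_density_step {a : H →ₗ[ℝ] H →ₗ[ℝ] ℝ} {B χ Δt r₀ r₁ : ℝ} {u₀ u₁ c₀ μ₁ s : H}
    (h1 : ∀ φ : H, ⟪u₁ - u₀, φ⟫ = -(Δt * χ) * a μ₁ φ)
    (h3 : ∀ φ : H, ⟪μ₁, φ⟫ = -⟪c₀, φ⟫ + B * r₁ * ⟪s, φ⟫)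
    (h5 : r₁ - r₀ = (1 / 2) * ⟪s, u₁ - u₀⟫) :
    2 * B * r₁ * (r₁ - r₀) - ⟪c₀, u₁ - u₀⟫ = -Δt * (χ * a μ₁ μ₁) := by
  have hμ₁ : ⟪μ₁, u₁ - u₀⟫ = -(Δt * χ) * a μ₁ μ₁ := by rw [real_inner_comm, h1]
  rw [h3] at hμ₁
  linear_combination hμ₁ + 2 * B * r₁ * h5

end SAV

theorem sav_discrete_energy_decay_general {H : Type*} [NormedAddCommGroup H] [InnerProductSpace ℝ H]
    (a b : H →ₗ[ℝ] H →ₗ[ℝ] ℝ)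
    (hapos : ∀ v : H, 0 ≤ a v v)
    (hbsym : ∀ v w : H, b v w = b w v) (hbpos : ∀ v : H, 0 ≤ b v v)
    (α B χ Δt : ℝ) (hα : 0 < α) (hB : 0 < B) (hχ : 0 < χ) (hΔt : 0 < Δt)
    (u₀ u₁ c₀ c₁ μ₁ μ₂ s : H) (r₀ r₁ : ℝ)
    (h1 : ∀ φ : H, ⟪u₁ - u₀, φ⟫ = -(Δt * χ) * a μ₁ φ)
    (h2 : ∀ φ : H, ⟪c₁ - c₀, φ⟫ = -Δt * ⟪μ₂, φ⟫)
    (h3 : ∀ φ : H, ⟪μ₁, φ⟫ = -⟪c₀, φ⟫ + B * r₁ * ⟪s, φ⟫)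
    (h4 : ∀ φ : H, ⟪μ₂, φ⟫ = b c₁ φ + α * ⟪c₁, φ⟫ - ⟪u₁, φ⟫)
    (h5 : r₁ - r₀ = (1 / 2) * ⟪s, u₁ - u₀⟫) :
    (((1 / 2) * (b c₁ c₁ + α * ‖c₁‖ ^ 2) + B * r₁ ^ 2 - ⟪c₁, u₁⟫) -
      ((1 / 2) * (b c₀ c₀ + α * ‖c₀‖ ^ 2) + B * r₀ ^ 2 - ⟪c₀, u₀⟫)
        ≤ -Δt * (‖μ₂‖ ^ 2 + χ * a μ₁ μ₁)) ∧
    -Δt * (‖μ₂‖ ^ 2 + χ * a μ₁ μ₁) ≤ 0 := by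
  have henergy := savEnergy_sub_savEnergy b hbsym α B u₀ u₁ c₀ c₁ r₀ r₁
  rw [sav_concentration_step h2 h4, sav_density_step h1 h3 h5] at henergy
  have hdiss := sav_numerical_dissipation_nonneg b hbpos hα.le hB.le (c₁ - c₀) (r₁ - r₀)
  have hrate : 0 ≤ ‖μ₂‖ ^ 2 + χ * a μ₁ μ₁ := by
    have := hapos μ₁
    positivity
  exact ⟨by unfold savEnergy at henergy; linarith,
    mul_nonpos_of_nonpos_of_nonneg (neg_nonpos.mpr hΔt.le) hrate⟩

/-- Abstract discrete energy decay for the SAV scheme: under the five discrete relations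
(i)–(v), the modified discrete energy
`E(u,c,r) = (1/2)·(b(c,c) + α·‖c‖²) + B·r² − ⟨c,u⟩` satisfies
`E(u¹,c¹,r¹) − E(u⁰,c⁰,r⁰) ≤ −Δt·(‖μ₂‖² + χ·a(μ₁,μ₁)) ≤ 0`. -/
theorem sav_discrete_energy_decay {H : Type*} [NormedAddCommGroup H] [InnerProductSpace ℝ H]
    (a b : H →ₗ[ℝ] H →ₗ[ℝ] ℝ)
    (hasym : ∀ v w : H, a v w = a w v) (hapos : ∀ v : H, 0 ≤ a v v)
    (hbsym : ∀ v w : H, b v w = b w v) (hbpos : ∀ v : H, 0 ≤ b v v)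
    (α B χ Δt : ℝ) (hα : 0 < α) (hB : 0 < B) (hχ : 0 < χ) (hΔt : 0 < Δt)
    (u₀ u₁ c₀ c₁ μ₁ μ₂ s : H) (r₀ r₁ : ℝ)
    (h1 : ∀ φ : H, ⟪u₁ - u₀, φ⟫ = -(Δt * χ) * a μ₁ φ)
    (h2 : ∀ φ : H, ⟪c₁ - c₀, φ⟫ = -Δt * ⟪μ₂, φ⟫)
    (h3 : ∀ φ : H, ⟪μ₁, φ⟫ = -⟪c₀, φ⟫ + B * r₁ * ⟪s, φ⟫)
    (h4 : ∀ φ : H, ⟪μ₂, φ⟫ = b c₁ φ + α * ⟪c₁, φ⟫ - ⟪u₁, φ⟫)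
    (h5 : r₁ - r₀ = (1 / 2) * ⟪s, u₁ - u₀⟫) :
    (((1 / 2) * (b c₁ c₁ + α * ‖c₁‖ ^ 2) + B * r₁ ^ 2 - ⟪c₁, u₁⟫) -
      ((1 / 2) * (b c₀ c₀ + α * ‖c₀‖ ^ 2) + B * r₀ ^ 2 - ⟪c₀, u₀⟫)
        ≤ -Δt * (‖μ₂‖ ^ 2 + χ * a μ₁ μ₁)) ∧
    -Δt * (‖μ₂‖ ^ 2 + χ * a μ₁ μ₁) ≤ 0 :=
  sav_discrete_energy_decay_general a b hapos hbsym hbpos α B χ Δt hα hB hχ hΔt u₀ u₁ c₀ c₁ μ₁ μ₂ s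
    r₀ r₁ h1 h2 h3 h4 h5
end
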